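/- (Kato's stability theorem for bounded invertibility.) Let X and Y be Banach spaces, let D ⊆ X be a linear subspace, and let T : D → Y and A : D → Y be linear maps. Suppose T is a bijection from D onto Y whose inverse T⁻¹ : Y → X is a bounded linear operator. Suppose A is T-bounded: there are nonnegative constants a, b such that ‖Au‖ ≤ a‖u‖ + b‖Tu‖ for all u ∈ D, and assume a‖T⁻¹‖ + b < 1. Then S := T + A is a bijection from D onto Y, its inverse S⁻¹ : Y → X is bounded, and ‖S⁻¹‖ ≤ ‖T⁻¹‖ / (1 − a‖T⁻¹‖ − b). -/
import Mathlib


/-- Kato's stability theorem for bounded invertibility: if `T : D → Y` is a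
bijection with bounded inverse `Tinv`, and `A` is `T`-bounded with
`a‖Tinv‖ + b < 1`, then `S = T + A` is a bijection from `D` onto `Y` with a
bounded inverse `Sinv` satisfying `‖Sinv‖ ≤ ‖Tinv‖ / (1 - a‖Tinv‖ - b)`. -/
theorem kato_stability_bounded_invertibility
    {X Y : Type*} [NormedAddCommGroup X] [NormedSpace ℝ X] [CompleteSpace X]
    [NormedAddCommGroup Y] [NormedSpace ℝ Y] [CompleteSpace Y]
    (D : Submodule ℝ X) (T A : D →ₗ[ℝ] Y)
    (Tinv : Y →L[ℝ] X)
    (hTbij : Function.Bijective T)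
    (hTleft : ∀ u : D, Tinv (T u) = u)
    (hTright : ∀ y : Y, ∃ hy : Tinv y ∈ D, T ⟨Tinv y, hy⟩ = y)
    (a b : ℝ) (ha : 0 ≤ a) (hb : 0 ≤ b)
    (hAbnd : ∀ u : D, ‖A u‖ ≤ a * ‖(u : X)‖ + b * ‖T u‖)
    (hsmall : a * ‖Tinv‖ + b < 1) :
    Function.Bijective (T + A) ∧
      ∃ Sinv : Y →L[ℝ] X,
        (∀ u : D, Sinv ((T + A) u) = u) ∧
        (∀ y : Y, ∃ hy : Sinv y ∈ D, (T + A) ⟨Sinv y, hy⟩ = y) ∧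
        ‖Sinv‖ ≤ ‖Tinv‖ / (1 - a * ‖Tinv‖ - b) := by
  -- the inverse of `T` as a linear map `Y →ₗ D`
  set Tinv' : Y →ₗ[ℝ] D :=
    { toFun := fun y => ⟨Tinv y, (hTright y).choose⟩
      map_add' := fun y z => by ext; simp
      map_smul' := fun c y => by ext; simp } with hTinv'
  have hTinv'_val : ∀ y : Y, (Tinv' y : X) = Tinv y := fun y => rfl
  have hTT : ∀ y : Y, T (Tinv' y) = y := fun y => (hTright y).choose_spec
  have hTinv'T : ∀ w : D, Tinv' (T w) = w := fun w => Subtype.ext (hTleft w)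
  -- the perturbation `C = A ∘ Tinv'` as a continuous operator on `Y`
  have hbound : ∀ y : Y, ‖(A ∘ₗ Tinv') y‖ ≤ (a * ‖Tinv‖ + b) * ‖y‖ := by
    intro y
    have h1 : ‖A (Tinv' y)‖ ≤ a * ‖(Tinv' y : X)‖ + b * ‖T (Tinv' y)‖ := hAbnd _
    have h2 : ‖Tinv y‖ ≤ ‖Tinv‖ * ‖y‖ := Tinv.le_opNorm y
    have h3 : a * ‖Tinv y‖ ≤ a * (‖Tinv‖ * ‖y‖) := by
      exact mul_le_mul_of_nonneg_left h2 ha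
    calc ‖(A ∘ₗ Tinv') y‖ = ‖A (Tinv' y)‖ := rfl
      _ ≤ a * ‖(Tinv' y : X)‖ + b * ‖T (Tinv' y)‖ := h1
      _ = a * ‖Tinv y‖ + b * ‖y‖ := by rw [hTinv'_val, hTT]
      _ ≤ a * (‖Tinv‖ * ‖y‖) + b * ‖y‖ := by linarith
      _ = (a * ‖Tinv‖ + b) * ‖y‖ := by ring
  set C : Y →L[ℝ] Y := (A ∘ₗ Tinv').mkContinuous (a * ‖Tinv‖ + b) hbound with hCdef
  have hTinvnn : (0:ℝ) ≤ ‖Tinv‖ := norm_nonneg _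
  have habnn : 0 ≤ a * ‖Tinv‖ + b := by positivity
  have hCle : ‖C‖ ≤ a * ‖Tinv‖ + b :=
    (A ∘ₗ Tinv').mkContinuous_norm_le habnn hbound
  have hClt : ‖C‖ < 1 := lt_of_le_of_lt hCle hsmall
  have hCneg : ‖(-C : Y →L[ℝ] Y)‖ < 1 := by rwa [norm_neg]
  set u : (Y →L[ℝ] Y)ˣ := Units.oneSub (-C) hCneg with hu
  have huval : (u : Y →L[ℝ] Y) = 1 + C := by
    show (1 : Y →L[ℝ] Y) - (-C) = 1 + C
    rw [sub_neg_eq_add]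
  -- key identity: `(T + A) w = u (T w)`
  have hkey : ∀ w : D, (T + A) w = (u : Y →L[ℝ] Y) (T w) := by
    intro w
    rw [huval]
    show T w + A w = (1 + C) (T w)
    rw [ContinuousLinearMap.add_apply, ContinuousLinearMap.one_apply]
    have : C (T w) = A (Tinv' (T w)) := rfl
    rw [this, hTinv'T]
  set Sinv : Y →L[ℝ] X := Tinv.comp (↑u⁻¹ : Y →L[ℝ] Y) with hSinv
  have huinv_u : ∀ y : Y, (↑u⁻¹ : Y →L[ℝ] Y) ((u : Y →L[ℝ] Y) y) = y := by
    intro y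
    calc (↑u⁻¹ : Y →L[ℝ] Y) ((u : Y →L[ℝ] Y) y) = ((↑u⁻¹ * ↑u : Y →L[ℝ] Y)) y := rfl
      _ = (1 : Y →L[ℝ] Y) y := by rw [u.inv_mul]
      _ = y := rfl
  have hu_uinv : ∀ y : Y, (u : Y →L[ℝ] Y) ((↑u⁻¹ : Y →L[ℝ] Y) y) = y := by
    intro y
    calc (u : Y →L[ℝ] Y) ((↑u⁻¹ : Y →L[ℝ] Y) y) = ((↑u * ↑u⁻¹ : Y →L[ℝ] Y)) y := rfl
      _ = (1 : Y →L[ℝ] Y) y := by rw [u.mul_inv]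
      _ = y := rfl
  have hleft : ∀ w : D, Sinv ((T + A) w) = w := by
    intro w
    rw [hkey w]
    show Tinv ((↑u⁻¹ : Y →L[ℝ] Y) ((u : Y →L[ℝ] Y) (T w))) = w
    rw [huinv_u, hTleft]
  have hright : ∀ y : Y, ∃ hy : Sinv y ∈ D, (T + A) ⟨Sinv y, hy⟩ = y := by
    intro y
    set z := (↑u⁻¹ : Y →L[ℝ] Y) y with hz
    have hSy : Sinv y = Tinv z := rfl
    refine ⟨hSy ▸ (hTright z).choose, ?_⟩
    have hmem : (⟨Sinv y, hSy ▸ (hTright z).choose⟩ : D) = Tinv' z := by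
      exact Subtype.ext rfl
    rw [hmem, hkey, hTT, hu_uinv]
  refine ⟨⟨fun w₁ w₂ h => ?_, fun y => ?_⟩, Sinv, hleft, hright, ?_⟩
  · have h1 := hleft w₁
    rw [h, hleft w₂] at h1
    exact Subtype.ext h1.symm
  · obtain ⟨hy, hy2⟩ := hright y
    exact ⟨⟨Sinv y, hy⟩, hy2⟩
  · -- norm estimate
    have hden : 0 < 1 - (a * ‖Tinv‖ + b) := by linarith
    have hden' : 0 < 1 - ‖C‖ := by linarith
    have hinvnorm : ‖(↑u⁻¹ : Y →L[ℝ] Y)‖ ≤ (1 - ‖C‖)⁻¹ := by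
      have : (↑u⁻¹ : Y →L[ℝ] Y) = ∑' n : ℕ, (-C) ^ n := rfl
      rw [this]
      have h1 := tsum_geometric_le_of_norm_lt_one (-C) hCneg
      have h2 : ‖(1 : Y →L[ℝ] Y)‖ ≤ 1 := ContinuousLinearMap.norm_id_le
      rw [norm_neg] at h1
      linarith
    calc ‖Sinv‖ ≤ ‖Tinv‖ * ‖(↑u⁻¹ : Y →L[ℝ] Y)‖ := Tinv.opNorm_comp_le _
      _ ≤ ‖Tinv‖ * (1 - ‖C‖)⁻¹ := mul_le_mul_of_nonneg_left hinvnorm hTinvnn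
      _ ≤ ‖Tinv‖ * (1 - (a * ‖Tinv‖ + b))⁻¹ := by
          apply mul_le_mul_of_nonneg_left _ hTinvnn
          exact inv_anti₀ hden (by linarith)
      _ = ‖Tinv‖ / (1 - a * ‖Tinv‖ - b) := by rw [div_eq_mul_inv]; ring_nf
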